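/- Let n ∈ ℕ, c₁, c₂ ∈ [0,1), Λ > 0 and k real constants, L : ℝ → ℝ a smooth positive 1-periodic function, and μ : ℝ² → ℝ a smooth ℤ²-periodic function. Define the smooth field of symmetric bilinear forms on ℝ³: g̃ = Λ(dx⊗dz + dz⊗dx) + L(z)²·dy⊗dy + (k − nΛz)(dy⊗dz + dz⊗dy) + μ(y,z)·dz⊗dz. Then: (i) g̃ is invariant under Γ_{n,c₁,c₂}; (ii) the diffeomorphism σ of ℝ³ defined by σ(x,y,z) = (x + z, y, z) normalizes Γ_{n,c₁,c₂}; (iii) σ*g̃ = g̃ + 2Λ·dz⊗dz; in particular σ*g̃ ≠ g̃, so σ is not an isometry of g̃. -/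

import Mathlib

noncomputable section

/-- The bijection `(x,y,z) ↦ (x + φ(y,z), y + ψ(z), z + b)` of `ℝ³`. -/
def affMap (φ : ℝ × ℝ → ℝ) (ψ : ℝ → ℝ) (b : ℝ) : Equiv.Perm (ℝ × ℝ × ℝ) where
  toFun p := (p.1 + φ p.2, p.2.1 + ψ p.2.2, p.2.2 + b)
  invFun p := (p.1 - φ (p.2.1 - ψ (p.2.2 - b), p.2.2 - b), p.2.1 - ψ (p.2.2 - b), p.2.2 - b)
  left_inv := by rintro ⟨x, y, z⟩; simp
  right_inv := by rintro ⟨x, y, z⟩; simp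

/-- The group `Γ_{n,c₁,c₂}`, generated by `(x,y,z) ↦ (x+1,y,z)`,
`(x,y,z) ↦ (x+c₁,y+1,z)` and `(x,y,z) ↦ (x+ny+c₂,y,z+1)`. -/
def Gamma (n : ℕ) (c₁ c₂ : ℝ) : Subgroup (Equiv.Perm (ℝ × ℝ × ℝ)) :=
  Subgroup.closure
    { affMap (fun _ => 1) (fun _ => 0) 0,
      affMap (fun _ => c₁) (fun _ => 1) 0,
      affMap (fun q => n * q.1 + c₂) (fun _ => 0) 1 }

/-- The metric `g̃ = Λ(dx⊗dz + dz⊗dx) + L(z)²·dy⊗dy + (k − nΛz)(dy⊗dz + dz⊗dy)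
+ μ(y,z)·dz⊗dz`. -/
def gFourteen (n : ℕ) (Λ k : ℝ) (L : ℝ → ℝ) (μ : ℝ × ℝ → ℝ) (p u v : ℝ × ℝ × ℝ) : ℝ :=
  Λ * (u.1 * v.2.2 + u.2.2 * v.1) + (L p.2.2) ^ 2 * u.2.1 * v.2.1
    + (k - n * Λ * p.2.2) * (u.2.1 * v.2.2 + u.2.2 * v.2.1)
    + μ p.2 * (u.2.2 * v.2.2)

/-
Every element of `Γ_{n,c₁,c₂}` is a unipotent affine map
`(x,y,z) ↦ (x + nby + a, y + s, z + b)` with `s, b ∈ ℤ`, and `σ` is the unipotent affine map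
`(x,y,z) ↦ (x + z, y, z)`. Pulling `g̃` back along `(x,y,z) ↦ (x + my + rz + a, y + s, z + b)`
shifts the arguments of `L` and `μ` by `b` and `(s, b)`, and changes the coefficient of
`dy⊗dz + dz⊗dy` by `Λ(m - nb)` and that of `dz⊗dz` by `2Λr`. For elements of `Γ` the shifts are
integral, so periodicity absorbs them, and `m = nb`, `r = 0`; for `σ` only `2Λ·dz⊗dz` remains.
Conjugating an element of `Γ` by `σ^{±1}` multiplies it by the integer translation
`(x,y,z) ↦ (x ± b, y, z)`, which lies in `Γ`.
-/

lemma affMap_apply (φ : ℝ × ℝ → ℝ) (ψ : ℝ → ℝ) (b : ℝ) (p : ℝ × ℝ × ℝ) :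
    affMap φ ψ b p = (p.1 + φ p.2, p.2.1 + ψ p.2.2, p.2.2 + b) :=
  rfl

def unipAff (m r a s b : ℝ) : Equiv.Perm (ℝ × ℝ × ℝ) :=
  affMap (fun q => m * q.1 + r * q.2 + a) (fun _ => s) b

lemma unipAff_apply (m r a s b : ℝ) (p : ℝ × ℝ × ℝ) :
    unipAff m r a s b p = (p.1 + m * p.2.1 + r * p.2.2 + a, p.2.1 + s, p.2.2 + b) := by
  simp only [unipAff, affMap_apply, add_assoc]

lemma unipAff_mul (m r a s b m' r' a' s' b' : ℝ) :
    unipAff m r a s b * unipAff m' r' a' s' b'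
      = unipAff (m + m') (r + r') (a + a' + m * s' + r * b') (s + s') (b + b') := by
  ext p <;> simp only [Equiv.Perm.mul_apply, unipAff_apply] <;> ring

lemma unipAff_zero : unipAff 0 0 0 0 0 = 1 := by
  ext p <;> simp [unipAff_apply]

lemma unipAff_inv (m r a s b : ℝ) :
    (unipAff m r a s b)⁻¹ = unipAff (-m) (-r) (-a + m * s + r * b) (-s) (-b) := by
  refine (eq_inv_of_mul_eq_one_left ?_).symm
  rw [unipAff_mul, ← unipAff_zero]
  congr 1 <;> ring

def unipAffLinear (m r : ℝ) : (ℝ × ℝ × ℝ) →L[ℝ] (ℝ × ℝ × ℝ) :=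
  (ContinuousLinearMap.fst ℝ ℝ (ℝ × ℝ)
    + m • (ContinuousLinearMap.fst ℝ ℝ ℝ).comp (ContinuousLinearMap.snd ℝ ℝ (ℝ × ℝ))
    + r • (ContinuousLinearMap.snd ℝ ℝ ℝ).comp (ContinuousLinearMap.snd ℝ ℝ (ℝ × ℝ))).prod
    (ContinuousLinearMap.snd ℝ ℝ (ℝ × ℝ))

lemma unipAffLinear_apply (m r : ℝ) (u : ℝ × ℝ × ℝ) :
    unipAffLinear m r u = (u.1 + m * u.2.1 + r * u.2.2, u.2.1, u.2.2) := by
  simp [unipAffLinear]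

lemma hasFDerivAt_unipAff (m r a s b : ℝ) (p : ℝ × ℝ × ℝ) :
    HasFDerivAt (unipAff m r a s b) (unipAffLinear m r) p := by
  have h : ⇑(unipAff m r a s b) = fun q => unipAffLinear m r q + (a, s, b) := by
    funext q
    simp only [unipAff_apply, unipAffLinear_apply, Prod.mk_add_mk]
  rw [h]
  exact (unipAffLinear m r).hasFDerivAt.add_const _

lemma fderiv_unipAff_apply (m r a s b : ℝ) (p u : ℝ × ℝ × ℝ) :
    fderiv ℝ (unipAff m r a s b) p u = (u.1 + m * u.2.1 + r * u.2.2, u.2.1, u.2.2) := by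
  rw [(hasFDerivAt_unipAff m r a s b p).fderiv, unipAffLinear_apply]

lemma gFourteen_pullback_unipAff (n : ℕ) (Λ k : ℝ) (L : ℝ → ℝ) (μ : ℝ × ℝ → ℝ)
    (m r a s b : ℝ) (p u v : ℝ × ℝ × ℝ) :
    gFourteen n Λ k L μ (unipAff m r a s b p)
        (fderiv ℝ (unipAff m r a s b) p u) (fderiv ℝ (unipAff m r a s b) p v)
      = gFourteen n Λ k (fun z => L (z + b)) (fun q => μ (q.1 + s, q.2 + b)) p u v
        + Λ * (m - n * b) * (u.2.1 * v.2.2 + u.2.2 * v.2.1) + 2 * Λ * r * (u.2.2 * v.2.2) := by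
  simp only [gFourteen, fderiv_unipAff_apply, unipAff_apply]
  ring

lemma Function.Periodic.add_intCast_eq {α β : Type*} [Ring α] {f : α → β}
    (h : Function.Periodic f 1) (x : α) (j : ℤ) :
    f (x + j) = f x := by
  simpa using h.int_mul j x

lemma gFourteen_pullback_unipAff_of_periodic (n : ℕ) (Λ k : ℝ) (L : ℝ → ℝ) (μ : ℝ × ℝ → ℝ)
    (hLper : Function.Periodic L 1)
    (hμper : ∀ y z : ℝ, μ (y + 1, z) = μ (y, z) ∧ μ (y, z + 1) = μ (y, z))
    (a : ℝ) (s b : ℤ) (p u v : ℝ × ℝ × ℝ) :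
    gFourteen n Λ k L μ (unipAff (n * b) 0 a s b p)
        (fderiv ℝ (unipAff (n * b) 0 a s b) p u) (fderiv ℝ (unipAff (n * b) 0 a s b) p v)
      = gFourteen n Λ k L μ p u v := by
  have hL : (fun z => L (z + b)) = L :=
    funext fun z => hLper.add_intCast_eq z b
  have hμ : (fun q : ℝ × ℝ => μ (q.1 + s, q.2 + b)) = μ := by
    funext q
    rw [Function.Periodic.add_intCast_eq (f := fun y => μ (y, q.2 + b)) (fun y => (hμper y _).1),
      Function.Periodic.add_intCast_eq (f := fun z => μ (q.1, z)) (fun z => (hμper _ z).2)]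
  rw [gFourteen_pullback_unipAff, hL, hμ]
  ring

def shearGroup (n : ℕ) : Subgroup (Equiv.Perm (ℝ × ℝ × ℝ)) where
  carrier := {φ | ∃ (a : ℝ) (s b : ℤ), φ = unipAff (n * b) 0 a s b}
  one_mem' := ⟨0, 0, 0, by simp [unipAff_zero]⟩
  mul_mem' := by
    rintro _ _ ⟨a, s, b, rfl⟩ ⟨a', s', b', rfl⟩
    refine ⟨a + a' + n * b * s', s + s', b + b', ?_⟩
    rw [unipAff_mul]
    congr 1 <;> push_cast <;> ring
  inv_mem' := by
    rintro _ ⟨a, s, b, rfl⟩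
    refine ⟨-a + n * b * s, -s, -b, ?_⟩
    rw [unipAff_inv]
    congr 1 <;> push_cast <;> ring

lemma Gamma_le_shearGroup (n : ℕ) (c₁ c₂ : ℝ) : Gamma n c₁ c₂ ≤ shearGroup n := by
  refine Subgroup.closure_le _ |>.2 ?_
  rintro _ (rfl | rfl | rfl)
  · exact ⟨1, 0, 0, by ext p <;> simp [affMap_apply, unipAff_apply]⟩
  · exact ⟨c₁, 1, 0, by ext p <;> simp [affMap_apply, unipAff_apply]⟩
  · exact ⟨c₂, 0, 1, by ext p <;> simp [affMap_apply, unipAff_apply, add_assoc]⟩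

lemma unipAff_translation_mem_Gamma (n : ℕ) (c₁ c₂ : ℝ) (j : ℤ) :
    unipAff 0 0 j 0 0 ∈ Gamma n c₁ c₂ := by
  have h₁ : unipAff 0 0 1 0 0 ∈ Gamma n c₁ c₂ :=
    Subgroup.subset_closure (Or.inl (by ext p <;> simp [affMap_apply, unipAff_apply]))
  have hpow : unipAff 0 0 j 0 0 = unipAff 0 0 1 0 0 ^ j := by
    induction j using Int.induction_on with
    | zero => simp [unipAff_zero]
    | succ i ih =>
      rw [zpow_add_one, ← ih, unipAff_mul]
      congr 1 <;> push_cast <;> ring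
    | pred i ih =>
      rw [zpow_sub_one, ← ih, unipAff_inv, unipAff_mul]
      congr 1 <;> push_cast <;> ring
  rw [hpow]
  exact zpow_mem h₁ j

lemma unipAff_conj_mem_Gamma (n : ℕ) (c₁ c₂ : ℝ) (t : ℤ) {φ : Equiv.Perm (ℝ × ℝ × ℝ)}
    (hφ : φ ∈ Gamma n c₁ c₂) :
    unipAff 0 t 0 0 0 * φ * (unipAff 0 t 0 0 0)⁻¹ ∈ Gamma n c₁ c₂ := by
  obtain ⟨a, s, b, rfl⟩ := Gamma_le_shearGroup n c₁ c₂ hφ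
  have hconj : unipAff 0 t 0 0 0 * unipAff (n * b) 0 a s b * (unipAff 0 t 0 0 0)⁻¹
      = unipAff (n * b) 0 a s b * unipAff 0 0 ((t * b : ℤ) : ℝ) 0 0 := by
    simp only [unipAff_inv, unipAff_mul]
    congr 1 <;> push_cast <;> ring
  rw [hconj]
  exact mul_mem hφ (unipAff_translation_mem_Gamma n c₁ c₂ _)

lemma affMap_snd_eq_unipAff : affMap (fun w => w.2) (fun _ => 0) 0 = unipAff 0 1 0 0 0 := by
  ext p <;> simp [affMap_apply, unipAff_apply]

lemma unipAff_zero_one_mem_normalizer_Gamma (n : ℕ) (c₁ c₂ : ℝ) :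
    unipAff 0 1 0 0 0 ∈ Subgroup.normalizer (Gamma n c₁ c₂ : Set (Equiv.Perm (ℝ × ℝ × ℝ))) := by
  have hσ : unipAff 0 1 0 0 0 = unipAff 0 ((1 : ℤ) : ℝ) 0 0 0 := by norm_num
  have hσinv : (unipAff 0 1 0 0 0)⁻¹ = unipAff 0 ((-1 : ℤ) : ℝ) 0 0 0 := by
    rw [unipAff_inv]
    congr 1 <;> push_cast <;> ring
  refine Subgroup.mem_set_normalizer_iff.2 fun φ => ⟨fun hφ => ?_, fun hφ => ?_⟩
  · rw [hσ]
    exact unipAff_conj_mem_Gamma n c₁ c₂ 1 hφ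
  · have h := unipAff_conj_mem_Gamma n c₁ c₂ (-1) hφ
    rw [← hσinv, inv_inv] at h
    simpa [mul_assoc] using h

theorem stmt_14_general (n : ℕ) (c₁ c₂ : ℝ)
    (Λ k : ℝ) (hΛ : 0 < Λ)
    (L : ℝ → ℝ)
    (hLper : ∀ z : ℝ, L (z + 1) = L z)
    (μ : ℝ × ℝ → ℝ)
    (hμper : ∀ y z : ℝ, μ (y + 1, z) = μ (y, z) ∧ μ (y, z + 1) = μ (y, z)) :
    (∀ φ ∈ Gamma n c₁ c₂, ∀ p u v : ℝ × ℝ × ℝ,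
      gFourteen n Λ k L μ (φ p) (fderiv ℝ (⇑φ) p u) (fderiv ℝ (⇑φ) p v)
        = gFourteen n Λ k L μ p u v) ∧
    (affMap (fun w => w.2) (fun _ => 0) 0 ∈ Subgroup.normalizer ((Gamma n c₁ c₂ : Subgroup (Equiv.Perm (ℝ × ℝ × ℝ))) : Set (Equiv.Perm (ℝ × ℝ × ℝ)))) ∧
    (∀ p u v : ℝ × ℝ × ℝ,
      gFourteen n Λ k L μ (affMap (fun w => w.2) (fun _ => 0) 0 p)
          (fderiv ℝ (⇑(affMap (fun w => w.2) (fun _ => 0) 0)) p u)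
          (fderiv ℝ (⇑(affMap (fun w => w.2) (fun _ => 0) 0)) p v)
        = gFourteen n Λ k L μ p u v + 2 * Λ * (u.2.2 * v.2.2)) ∧
    (∃ p u v : ℝ × ℝ × ℝ,
      gFourteen n Λ k L μ (affMap (fun w => w.2) (fun _ => 0) 0 p)
          (fderiv ℝ (⇑(affMap (fun w => w.2) (fun _ => 0) 0)) p u)
          (fderiv ℝ (⇑(affMap (fun w => w.2) (fun _ => 0) 0)) p v)
        ≠ gFourteen n Λ k L μ p u v) := by
  have hpull : ∀ p u v : ℝ × ℝ × ℝ,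
      gFourteen n Λ k L μ (affMap (fun w => w.2) (fun _ => 0) 0 p)
          (fderiv ℝ (⇑(affMap (fun w => w.2) (fun _ => 0) 0)) p u)
          (fderiv ℝ (⇑(affMap (fun w => w.2) (fun _ => 0) 0)) p v)
        = gFourteen n Λ k L μ p u v + 2 * Λ * (u.2.2 * v.2.2) := by
    intro p u v
    simpa [affMap_snd_eq_unipAff] using gFourteen_pullback_unipAff n Λ k L μ 0 1 0 0 0 p u v
  refine ⟨fun φ hφ p u v => ?_, affMap_snd_eq_unipAff ▸ unipAff_zero_one_mem_normalizer_Gamma n c₁ c₂,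
    hpull, ⟨0, (0, 0, 1), (0, 0, 1), ?_⟩⟩
  · obtain ⟨a, s, b, rfl⟩ := Gamma_le_shearGroup n c₁ c₂ hφ
    exact gFourteen_pullback_unipAff_of_periodic n Λ k L μ hLper hμper a s b p u v
  · rw [hpull]
    simpa using hΛ.ne'

/-- (i) `g̃` is `Γ_{n,c₁,c₂}`-invariant; (ii) `σ : (x,y,z) ↦ (x+z,y,z)` normalizes
`Γ_{n,c₁,c₂}`; (iii) `σ*g̃ = g̃ + 2Λ·dz⊗dz`; in particular `σ*g̃ ≠ g̃`, so `σ` is not an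
isometry of `g̃`. -/
theorem stmt_14 (n : ℕ) (c₁ c₂ : ℝ)
    (hc₁ : c₁ ∈ Set.Ico (0 : ℝ) 1) (hc₂ : c₂ ∈ Set.Ico (0 : ℝ) 1)
    (Λ k : ℝ) (hΛ : 0 < Λ)
    (L : ℝ → ℝ) (hLs : ContDiff ℝ (⊤ : ℕ∞) L) (hLpos : ∀ z : ℝ, 0 < L z)
    (hLper : ∀ z : ℝ, L (z + 1) = L z)
    (μ : ℝ × ℝ → ℝ) (hμs : ContDiff ℝ (⊤ : ℕ∞) μ)
    (hμper : ∀ y z : ℝ, μ (y + 1, z) = μ (y, z) ∧ μ (y, z + 1) = μ (y, z)) :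
    (∀ φ ∈ Gamma n c₁ c₂, ∀ p u v : ℝ × ℝ × ℝ,
      gFourteen n Λ k L μ (φ p) (fderiv ℝ (⇑φ) p u) (fderiv ℝ (⇑φ) p v)
        = gFourteen n Λ k L μ p u v) ∧
    (affMap (fun w => w.2) (fun _ => 0) 0 ∈ Subgroup.normalizer ((Gamma n c₁ c₂ : Subgroup (Equiv.Perm (ℝ × ℝ × ℝ))) : Set (Equiv.Perm (ℝ × ℝ × ℝ)))) ∧
    (∀ p u v : ℝ × ℝ × ℝ,
      gFourteen n Λ k L μ (affMap (fun w => w.2) (fun _ => 0) 0 p)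
          (fderiv ℝ (⇑(affMap (fun w => w.2) (fun _ => 0) 0)) p u)
          (fderiv ℝ (⇑(affMap (fun w => w.2) (fun _ => 0) 0)) p v)
        = gFourteen n Λ k L μ p u v + 2 * Λ * (u.2.2 * v.2.2)) ∧
    (∃ p u v : ℝ × ℝ × ℝ,
      gFourteen n Λ k L μ (affMap (fun w => w.2) (fun _ => 0) 0 p)
          (fderiv ℝ (⇑(affMap (fun w => w.2) (fun _ => 0) 0)) p u)
          (fderiv ℝ (⇑(affMap (fun w => w.2) (fun _ => 0) 0)) p v)
        ≠ gFourteen n Λ k L μ p u v) :=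
  stmt_14_general n c₁ c₂ Λ k hΛ L hLper μ hμper
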